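/- Let q_j, r_j ∈ W_2 = F_2[w_2, w_3] be as defined by the recursions q_j = w_2 q_{j−2} + w_3 q_{j−3} (q_0 = 1, q_{<0} = 0) and r_{j+1} = w_2 r_j + w_3² r_{j−2} (r_0 = 1, r_{<0} = 0). Fix t ≥ 4 and n with 2^{t−1} < n ≤ 2^t − 4; set i = 2^t − 3 − n, j = n − 2^{t−1} + 1. Then the kernel of the W_2-linear map W_2³ → W_2, (x,y,z) ↦ q_{n−2}x + q_{n−1}y + q_n z, is a free W_2-module of rank 2 with basis u = (r_j, w_3 r_{j−2}, r_{j−1}) and v = (w_3 q_{i−1}, q_{i+1}, q_i). -/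

import Mathlib

open MvPolynomial

/-- The polynomials `q j ∈ F₂[w₂,w₃]` (with `w₂ = X 0`, `w₃ = X 1`): `q 0 = 1`,
`q j = 0` for `j < 0`, and `q j = w₂ q (j-2) + w₃ q (j-3)`. -/
noncomputable def q3 (j : ℤ) : MvPolynomial (Fin 2) (ZMod 2) :=
  if j < 0 then 0
  else if j = 0 then 1
  else X 0 * q3 (j - 2) + X 1 * q3 (j - 3)
termination_by j.toNat
decreasing_by all_goals omega

/-- The polynomials `r j ∈ F₂[w₂,w₃]`: `r 0 = 1`, `r j = 0` for `j < 0`, and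
`r (j+1) = w₂ r j + w₃² r (j-2)`. -/
noncomputable def r3 (j : ℤ) : MvPolynomial (Fin 2) (ZMod 2) :=
  if j < 0 then 0
  else if j = 0 then 1
  else X 0 * r3 (j - 1) + (X 1) ^ 2 * r3 (j - 3)
termination_by j.toNat
decreasing_by all_goals omega

/-- The first Koszul differential `W₂³ → W₂`, `(x,y,z) ↦ q_{n−2} x + q_{n−1} y + q_n z`. -/
noncomputable def koszulD1 (n : ℤ) :
    (Fin 3 → MvPolynomial (Fin 2) (ZMod 2)) →ₗ[MvPolynomial (Fin 2) (ZMod 2)]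
      MvPolynomial (Fin 2) (ZMod 2) :=
  ∑ l : Fin 3, ![q3 (n - 2), q3 (n - 1), q3 n] l • LinearMap.proj l

abbrev W2 := MvPolynomial (Fin 2) (ZMod 2)

lemma htwo : (2 : W2) = 0 := by have := CharP.cast_eq_zero W2 2; simpa using this

lemma q3_neg {j : ℤ} (h : j < 0) : q3 j = 0 := by rw [q3]; simp [h]
lemma q3_zero : q3 0 = 1 := by rw [q3]; norm_num
lemma q3_rec {j : ℤ} (h : 1 ≤ j) : q3 j = X 0 * q3 (j - 2) + X 1 * q3 (j - 3) := by
  rw [q3]; rw [if_neg (by omega), if_neg (by omega)]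
lemma q3_rec' {j : ℤ} (h : j ≠ 0) : q3 j = X 0 * q3 (j - 2) + X 1 * q3 (j - 3) := by
  rcases lt_or_ge j 1 with h1 | h1
  · rw [q3_neg (by omega), q3_neg (by omega), q3_neg (by omega)]; ring
  · exact q3_rec h1
lemma r3_neg {j : ℤ} (h : j < 0) : r3 j = 0 := by rw [r3]; simp [h]
lemma r3_zero : r3 0 = 1 := by rw [r3]; norm_num
lemma r3_rec {j : ℤ} (h : 1 ≤ j) : r3 j = X 0 * r3 (j - 1) + (X 1) ^ 2 * r3 (j - 3) := by
  rw [r3]; rw [if_neg (by omega), if_neg (by omega)]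

lemma q3_one : q3 1 = 0 := by
  rw [q3_rec le_rfl, q3_neg (by norm_num), q3_neg (by norm_num)]; ring
lemma q3_two : q3 2 = X 0 := by
  rw [q3_rec (by norm_num)]; norm_num [q3_zero, q3_neg]
lemma q3_three : q3 3 = X 1 := by
  rw [q3_rec (by norm_num)]; norm_num [q3_zero, q3_one]

/-- Doubling formulas. -/
lemma q3_doubling (k : ℤ) :
    q3 (2*k) = q3 k ^ 2 + X 0 * q3 (k-1) ^ 2 ∧ q3 (2*k+1) = X 1 * q3 (k-1) ^ 2 := by
  rcases lt_or_ge k 0 with hk | hk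
  · rw [q3_neg hk, q3_neg (show k-1 < 0 by omega), q3_neg (show 2*k < 0 by omega),
      q3_neg (show 2*k+1 < 0 by omega)]
    constructor <;> ring
  rcases eq_or_lt_of_le hk with hk0 | hk1
  · subst_vars
    norm_num [q3_zero, q3_one, q3_neg (show (-1:ℤ) < 0 by norm_num)]
  · have hk1 : 1 ≤ k := hk1
    have ih1 := q3_doubling (k-1)
    have ih2 := q3_doubling (k-2)
    rw [show (2:ℤ)*(k-1)+1 = 2*k-1 by ring, show (2:ℤ)*(k-1) = 2*k-2 by ring,
      show k-1-1 = k-2 by ring] at ih1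
    rw [show (2:ℤ)*(k-2)+1 = 2*k-3 by ring, show k-2-1 = k-3 by ring] at ih2
    obtain ⟨ih1a, ih1b⟩ := ih1
    obtain ⟨-, ih2b⟩ := ih2
    have hq2k : q3 (2*k) = X 0 * q3 (2*k-2) + X 1 * q3 (2*k-3) := by
      have := q3_rec (j := 2*k) (by omega)
      rwa [show (2:ℤ)*k-2 = 2*k-2 by ring, show (2:ℤ)*k-3 = 2*k-3 by ring] at this
    have hq2k1 : q3 (2*k+1) = X 0 * q3 (2*k-1) + X 1 * q3 (2*k-2) := by
      have := q3_rec (j := 2*k+1) (by omega)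
      rwa [show (2:ℤ)*k+1-2 = 2*k-1 by ring, show (2:ℤ)*k+1-3 = 2*k-2 by ring] at this
    have hqk : q3 k = X 0 * q3 (k-2) + X 1 * q3 (k-3) := q3_rec hk1
    constructor
    · rw [hq2k, ih1a, ih2b]
      linear_combination (q3 k + X 0 * q3 (k-2) + X 1 * q3 (k-3)) * hqk +
        (X 0 * X 1 * q3 (k-2) * q3 (k-3) + X 0^2 * q3 (k-2)^2 + X 1^2 * q3 (k-3)^2
          - q3 k^2) * htwo
    · rw [hq2k1, ih1b, ih1a]
      linear_combination (X 0 * X 1 * q3 (k-2)^2) * htwo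
termination_by k.toNat
decreasing_by all_goals omega

lemma q3_d0 (k : ℤ) : q3 (2*k) = q3 k ^ 2 + X 0 * q3 (k-1) ^ 2 := (q3_doubling k).1
lemma q3_d1 (k : ℤ) : q3 (2*k+1) = X 1 * q3 (k-1) ^ 2 := (q3_doubling k).2

/-- `q_{2^s - 3} = 0`. -/
lemma q3_pow_sub_three (s : ℕ) : q3 (2^s - 3) = 0 := by
  induction s with
  | zero => exact q3_neg (by norm_num)
  | succ s ih =>
    rcases Nat.eq_zero_or_pos s with rfl | hs
    · exact q3_neg (by norm_num)
    have h : (2:ℤ)^(s+1) - 3 = 2*(2^s - 2) + 1 := by ring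
    rw [h, q3_d1, show (2:ℤ)^s - 2 - 1 = 2^s - 3 by ring, ih]
    ring

/-- `q_{2^s - 1} = w₃ q_{2^s - 4}` for `s ≥ 2`. -/
lemma q3_pow_sub_one (s : ℕ) (hs : 2 ≤ s) : q3 (2^s - 1) = X 1 * q3 (2^s - 4) := by
  induction s with
  | zero => omega
  | succ s ih =>
    rcases Nat.lt_or_ge s 2 with hs2 | hs2
    · interval_cases s
      · omega
      · norm_num [q3_three, q3_zero]
    have h1 : (2:ℤ)^(s+1) - 1 = 2*(2^s - 1) + 1 := by ring
    have h2 : (2:ℤ)^(s+1) - 4 = 2*(2^s - 2) := by ring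
    rw [h1, q3_d1, h2, q3_d0, show (2:ℤ)^s - 1 - 1 = 2^s - 2 by ring,
      show (2:ℤ)^s - 2 - 1 = 2^s - 3 by ring, q3_pow_sub_three s]
    ring

/-- `q_{2^s + 1} = w₃² q_{2^s - 5}` for `s ≥ 3`. -/
lemma q3_pow_add_one (s : ℕ) (hs : 3 ≤ s) : q3 (2^s + 1) = (X 1)^2 * q3 (2^s - 5) := by
  obtain ⟨s, rfl⟩ : ∃ s', s = s' + 1 := ⟨s - 1, by omega⟩
  have h1 : (2:ℤ)^(s+1) + 1 = 2*(2^s) + 1 := by ring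
  have h2 : (2:ℤ)^(s+1) - 5 = 2*(2^s - 3) + 1 := by ring
  rw [h1, q3_d1, h2, q3_d1, show (2:ℤ)^s - 1 = 2^s - 1 by ring,
    q3_pow_sub_one s (by omega), show (2:ℤ)^s - 3 - 1 = 2^s - 4 by ring]
  ring

lemma r3_one : r3 1 = X 0 := by
  rw [r3_rec le_rfl, show (1:ℤ)-1 = 0 by norm_num, show (1:ℤ)-3 = -2 by norm_num,
    r3_zero, r3_neg (show (-2:ℤ) < 0 by norm_num)]; ring
lemma r3_two : r3 2 = (X 0)^2 := by
  rw [r3_rec (by norm_num), show (2:ℤ)-1 = 1 by norm_num, r3_one,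
    r3_neg (show (2:ℤ)-3 < 0 by norm_num)]; ring

/-- The two key identity families, by simultaneous induction on `j`. -/
lemma bc_ident (m : ℤ) (hm : 8 ≤ m) (hm3 : q3 (m-3) = 0)
    (hm5 : q3 (m+1) = (X 1)^2 * q3 (m-5)) (j : ℤ) (h0 : 0 ≤ j) (hjm : j ≤ m-3) :
    (X 1 * r3 (j-1) * q3 (m-3-j) + r3 j * q3 (m-2-j) = q3 (m-2+j)) ∧
    (r3 j * q3 (m-1-j) + (X 1)^2 * r3 (j-2) * q3 (m-3-j) = q3 (m-1+j)) := by
  rcases (by omega : j = 0 ∨ j = 1 ∨ j = 2 ∨ 3 ≤ j) with rfl | rfl | rfl | hj3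
  · rw [r3_neg (by norm_num), r3_zero, r3_neg (by norm_num),
      show m-2+0 = m-2 by ring, show m-2-0 = m-2 by ring,
      show m-1+0 = m-1 by ring, show m-1-0 = m-1 by ring]
    constructor <;> ring
  · rw [show (1:ℤ)-1 = 0 by norm_num, show (1:ℤ)-2 = -1 by norm_num, r3_zero, r3_one,
      r3_neg (show (-1:ℤ) < 0 by norm_num), show m-2+1 = m-1 by ring,
      show m-1+1 = m by ring]
    have e1 : q3 (m-1) = X 0 * q3 (m-3) + X 1 * q3 (m-4) := by
      have := q3_rec (j := m-1) (by omega)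
      rwa [show m-1-2 = m-3 by ring, show m-1-3 = m-4 by ring] at this
    have e2 : q3 m = X 0 * q3 (m-2) + X 1 * q3 (m-3) := by
      have := q3_rec (j := m) (by omega)
      rwa [show m-2 = m-2 by ring, show m-3 = m-3 by ring] at this
    rw [show m-3-1 = m-4 by ring, show m-2-1 = m-3 by ring, show m-1-1 = m-2 by ring]
    constructor
    · rw [e1]; ring
    · rw [e2, hm3]; ring
  · rw [show (2:ℤ)-1 = 1 by norm_num, show (2:ℤ)-2 = 0 by norm_num, r3_one, r3_two, r3_zero,
      show m-2+2 = m by ring, show m-1+2 = m+1 by ring, show m-3-2 = m-5 by ring,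
      show m-2-2 = m-4 by ring, show m-1-2 = m-3 by ring]
    have e2 : q3 m = X 0 * q3 (m-2) + X 1 * q3 (m-3) := by
      have := q3_rec (j := m) (by omega); rwa [] at this
    have e3 : q3 (m-2) = X 0 * q3 (m-4) + X 1 * q3 (m-5) := by
      have := q3_rec (j := m-2) (by omega)
      rwa [show m-2-2 = m-4 by ring, show m-2-3 = m-5 by ring] at this
    constructor
    · rw [e2, hm3, e3]; ring
    · rw [hm3, hm5]; ring
  · -- inductive step
    have IH2 := bc_ident m hm hm3 hm5 (j-2) (by omega) (by omega)
    have IH3 := bc_ident m hm hm3 hm5 (j-3) (by omega) (by omega)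
    obtain ⟨hb2, hc2⟩ := IH2
    obtain ⟨hb3, hc3⟩ := IH3
    rw [show j-2-1 = j-3 by ring, show m-3-(j-2) = m-1-j by ring,
      show m-2-(j-2) = m-j by ring, show m-2+(j-2) = m-4+j by ring] at hb2
    rw [show m-1-(j-2) = m+1-j by ring, show j-2-2 = j-4 by ring,
      show m-3-(j-2) = m-1-j by ring, show m-1+(j-2) = m-3+j by ring] at hc2
    rw [show j-3-1 = j-4 by ring, show m-3-(j-3) = m-j by ring,
      show m-2-(j-3) = m+1-j by ring, show m-2+(j-3) = m-5+j by ring] at hb3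
    rw [show m-1-(j-3) = m+2-j by ring, show j-3-2 = j-5 by ring,
      show m-3-(j-3) = m-j by ring, show m-1+(j-3) = m-4+j by ring] at hc3
    have A1 : q3 (m+1-j) = X 0 * q3 (m-1-j) + X 1 * q3 (m-2-j) := by
      have := q3_rec (j := m+1-j) (by omega)
      rwa [show m+1-j-2 = m-1-j by ring, show m+1-j-3 = m-2-j by ring] at this
    have A2 : q3 (m-j) = X 0 * q3 (m-2-j) + X 1 * q3 (m-3-j) := by
      have := q3_rec (j := m-j) (by omega)
      rwa [show m-j-2 = m-2-j by ring, show m-j-3 = m-3-j by ring] at this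
    have A3 : q3 (m-1-j) = X 0 * q3 (m-3-j) + X 1 * q3 (m-4-j) := by
      have := q3_rec (j := m-1-j) (by omega)
      rwa [show m-1-j-2 = m-3-j by ring, show m-1-j-3 = m-4-j by ring] at this
    have A5 : q3 (m+2-j) = X 0 * q3 (m-j) + X 1 * q3 (m-1-j) := by
      have := q3_rec (j := m+2-j) (by omega)
      rwa [show m+2-j-2 = m-j by ring, show m+2-j-3 = m-1-j by ring] at this
    have A4B : q3 (m-2+j) = X 0 * q3 (m-4+j) + X 1 * q3 (m-5+j) := by
      have := q3_rec (j := m-2+j) (by omega)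
      rwa [show m-2+j-2 = m-4+j by ring, show m-2+j-3 = m-5+j by ring] at this
    have A4C : q3 (m-1+j) = X 0 * q3 (m-3+j) + X 1 * q3 (m-4+j) := by
      have := q3_rec (j := m-1+j) (by omega)
      rwa [show m-1+j-2 = m-3+j by ring, show m-1+j-3 = m-4+j by ring] at this
    have R1 : r3 j = X 0 * r3 (j-1) + (X 1)^2 * r3 (j-3) := r3_rec (by omega)
    have R2 : r3 (j-1) = X 0 * r3 (j-2) + (X 1)^2 * r3 (j-4) := by
      have := r3_rec (j := j-1) (by omega)
      rwa [show j-1-1 = j-2 by ring, show j-1-3 = j-4 by ring] at this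
    have R3 : r3 (j-2) = X 0 * r3 (j-3) + (X 1)^2 * r3 (j-5) := by
      have := r3_rec (j := j-2) (by omega)
      rwa [show j-2-1 = j-3 by ring, show j-2-3 = j-5 by ring] at this
    constructor
    · rw [A4B, R1, R2]
      rw [A2, A3] at hb2
      rw [A1, A2, A3] at hb3
      linear_combination (X 0) * hb2 + (X 1) * hb3 +
        (-(X 0 * X 1 * r3 (j-3)) * (X 0 * q3 (m-3-j) + X 1 * q3 (m-4-j))) * htwo
    · rw [A4C, R1, R2, A3]
      rw [A1, A3] at hc2
      rw [A5, A2, A3] at hc3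
      linear_combination (X 0) * hc2 + (X 1) * hc3
        - (X 1 * (X 0 * q3 (m-2-j) + X 1 * q3 (m-3-j))) * R3 +
        (- q3 (m-2-j) * r3 (j-3) * (X 0)^2 * X 1 - q3 (m-2-j) * r3 (j-5) * X 0 * (X 1)^3
         + q3 (m-3-j) * r3 (j-2) * (X 1)^2 - q3 (m-3-j) * r3 (j-3) * X 0 * (X 1)^2
         - q3 (m-3-j) * r3 (j-5) * (X 1)^4) * htwo
termination_by j.toNat
decreasing_by all_goals omega


noncomputable def evW : W2 →ₐ[ZMod 2] W2 := aeval ![X 0, 0]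

lemma evW_X0 : evW (X 0) = X 0 := by simp [evW]
lemma evW_X1 : evW (X 1) = 0 := by simp [evW]

lemma prime_X1 : Prime (X 1 : W2) := by
  let e := ((renameEquiv (ZMod 2) (Equiv.swap (0:Fin 2) 1)).trans
    (MvPolynomial.finSuccEquiv (ZMod 2) 1))
  have he : e (X 1) = Polynomial.X := by
    show (MvPolynomial.finSuccEquiv (ZMod 2) 1) (rename (Equiv.swap (0:Fin 2) 1) (X 1)) = _
    rw [rename_X, Equiv.swap_apply_right, MvPolynomial.finSuccEquiv_X_zero]
  apply (MulEquiv.prime_iff (p := (X 1 : W2)) e.toRingEquiv.toMulEquiv).mp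
  show Prime (e (X 1))
  rw [he]
  exact Polynomial.prime_X

lemma evW_q3_even (k : ℕ) : evW (q3 (2*(k:ℤ))) = (X 0 : W2)^k := by
  induction k with
  | zero => norm_num [q3_zero]
  | succ k ih =>
    have h : q3 (2*((k:ℤ)+1)) = X 0 * q3 (2*(k:ℤ)) + X 1 * q3 (2*(k:ℤ)-1) := by
      have := q3_rec (j := 2*((k:ℤ)+1)) (by omega)
      rwa [show 2*((k:ℤ)+1)-2 = 2*(k:ℤ) by ring, show 2*((k:ℤ)+1)-3 = 2*(k:ℤ)-1 by ring]
        at this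
    push_cast
    rw [h, map_add, map_mul, map_mul, evW_X0, evW_X1, ih]
    ring

lemma q3_even_ne_zero (k : ℕ) : q3 (2*(k:ℤ)) ≠ 0 := by
  intro h
  have := evW_q3_even k
  rw [h, map_zero] at this
  exact (pow_ne_zero k (X_ne_zero (R := ZMod 2) (σ := Fin 2) 0)) this.symm

lemma X1_not_dvd_q3_even (k : ℕ) : ¬ (X 1 : W2) ∣ q3 (2*(k:ℤ)) := by
  rintro ⟨c, hc⟩
  have := evW_q3_even k
  rw [hc, map_mul, evW_X1, zero_mul] at this
  exact (pow_ne_zero k (X_ne_zero (R := ZMod 2) (σ := Fin 2) 0)) this.symm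

/-- No prime divides three consecutive `q3`'s. -/
lemma no_common_prime (n : ℤ) (hn : 2 ≤ n) (p : W2) (hp : Prime p)
    (h0 : p ∣ q3 (n-2)) (h1 : p ∣ q3 (n-1)) (h2 : p ∣ q3 n) : False := by
  have hpX1 : ¬ p ∣ (X 1 : W2) := by
    intro hdvd
    have hassoc : Associated p (X 1 : W2) := hp.associated_of_dvd prime_X1 hdvd
    obtain ⟨k, hk⟩ : ∃ k : ℕ, n = 2*(k:ℤ) ∨ n - 1 = 2*(k:ℤ) := by
      rcases Int.even_or_odd n with ⟨k, hk⟩ | ⟨k, hk⟩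
      · exact ⟨k.toNat, Or.inl (by omega)⟩
      · exact ⟨k.toNat, Or.inr (by omega)⟩
    rcases hk with hk | hk
    · exact X1_not_dvd_q3_even k (hassoc.symm.dvd.trans (hk ▸ h2))
    · exact X1_not_dvd_q3_even k (hassoc.symm.dvd.trans (hk ▸ h1))
  have key : ∀ d : ℕ, (d:ℤ) ≤ n - 2 →
      p ∣ q3 (n-2-d) ∧ p ∣ q3 (n-1-d) ∧ p ∣ q3 (n-d) := by
    intro d
    induction d with
    | zero => intro _; simpa using ⟨h0, h1, h2⟩
    | succ d ih =>
      intro hd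
      push_cast at hd ⊢
      obtain ⟨k0, k1, k2⟩ := ih (by omega)
      have hrec : q3 (n-d) = X 0 * q3 (n-2-d) + X 1 * q3 (n-3-d) := by
        have := q3_rec (j := n-(d:ℤ)) (by omega)
        rwa [show n-(d:ℤ)-2 = n-2-d by ring, show n-(d:ℤ)-3 = n-3-d by ring] at this
      have hdvd : p ∣ X 1 * q3 (n-3-d) := by
        have : X 1 * q3 (n-3-d) = q3 (n-d) - X 0 * q3 (n-2-d) := by rw [hrec]; ring
        rw [this]
        exact dvd_sub k2 (Dvd.dvd.mul_left k0 _)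
      have k3 : p ∣ q3 (n-3-d) := ((hp.dvd_mul.mp hdvd).resolve_left hpX1)
      refine ⟨?_, ?_, ?_⟩
      · rwa [show n-2-((d:ℤ)+1) = n-3-d by ring]
      · rwa [show n-1-((d:ℤ)+1) = n-2-d by ring]
      · rwa [show n-((d:ℤ)+1) = n-1-d by ring]
  obtain ⟨hq0, -, -⟩ := key (n-2).toNat (by omega)
  rw [show n-2-((n-2).toNat:ℤ) = 0 by omega, q3_zero] at hq0
  exact hp.not_unit (isUnit_of_dvd_one hq0)

/-- divisibility lemma in the UFD `W2`. -/
lemma key_div (a c : W2) :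
    ∀ b : W2, b ≠ 0 → (∀ p : W2, Prime p → p ∣ a → p ∣ b → p ∣ c → False) →
      (∀ x y z : W2, x*b = y*a → y*c = z*b → x*c = z*a →
      ∃ α : W2, x = α*a ∧ y = α*b ∧ z = α*c) := by
  intro b
  induction b using UniqueFactorizationMonoid.induction_on_prime with
  | h₁ => intro h; exact absurd rfl h
  | h₂ b hb =>
    intro _ _ x y z e1 e2 e3
    obtain ⟨binv, hbinv⟩ := IsUnit.exists_right_inv hb
    refine ⟨y * binv, ?_, ?_, ?_⟩
    · have hbne : b ≠ 0 := hb.ne_zero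
      apply mul_right_cancel₀ hbne
      calc x * b = y * a := e1
        _ = y * (binv * b) * a := by rw [mul_comm binv b, hbinv, mul_one]
        _ = y * binv * a * b := by ring
    · rw [mul_assoc, mul_comm binv b, hbinv, mul_one]
    · have hbne : b ≠ 0 := hb.ne_zero
      apply mul_right_cancel₀ hbne
      calc z * b = y * c := e2.symm
        _ = y * (binv * b) * c := by rw [mul_comm binv b, hbinv, mul_one]
        _ = y * binv * c * b := by ring
  | h₃ b₀ p hb₀ hp ih =>
    intro hpb hgcd x y z e1 e2 e3
    have hb₀ne : b₀ ≠ 0 := by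
      intro h; exact hpb (by rw [h, mul_zero])
    have hpy : p ∣ y := by
      by_cases hpa : p ∣ a
      · have hpc : ¬ p ∣ c := fun hpc => hgcd p hp hpa (dvd_mul_right p b₀) hpc
        have : p ∣ y * c := ⟨z * b₀, by linear_combination e2⟩
        exact (hp.dvd_mul.mp this).resolve_right hpc
      · have : p ∣ y * a := ⟨x * b₀, by linear_combination -e1⟩
        exact (hp.dvd_mul.mp this).resolve_right hpa
    obtain ⟨y', rfl⟩ := hpy
    have e1' : x * b₀ = y' * a := by
      apply mul_left_cancel₀ hp.ne_zero
      linear_combination e1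
    have e2' : y' * c = z * b₀ := by
      apply mul_left_cancel₀ hp.ne_zero
      linear_combination e2
    obtain ⟨α, hx, hy, hz⟩ := ih hb₀ne
      (fun p' hp' ha' hb' hc' => hgcd p' hp' ha' (hb'.mul_left p) hc') x y' z e1' e2' e3
    exact ⟨α, hx, by rw [hy]; ring, hz⟩

set_option maxHeartbeats 1000000 in
lemma kernel_basis_abstract (a u v : Fin 3 → W2)
    (hA : u 1 * v 2 + u 2 * v 1 = a 0)
    (hB : u 0 * v 2 + u 2 * v 0 = a 1)
    (hC : u 0 * v 1 + u 1 * v 0 = a 2)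
    (hne : a 0 ≠ 0 ∨ a 1 ≠ 0)
    (hgcd : ∀ p : W2, Prime p → p ∣ a 0 → p ∣ a 1 → p ∣ a 2 → False)
    (φ : (Fin 3 → W2) →ₗ[W2] W2)
    (hφ : ∀ x, φ x = a 0 * x 0 + a 1 * x 1 + a 2 * x 2) :
    ∃ b : Module.Basis (Fin 2) W2 ↥(LinearMap.ker φ),
      ((b 0 : Fin 3 → W2) = u) ∧ ((b 1 : Fin 3 → W2) = v) := by
  have hu : φ u = 0 := by
    rw [hφ]
    linear_combination (-(u 0))*hA + (-(u 1))*hB + (-(u 2))*hC +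
      (u 0*u 1*v 2 + u 0*u 2*v 1 + u 1*u 2*v 0)*htwo
  have hv : φ v = 0 := by
    rw [hφ]
    linear_combination (-(v 0))*hA + (-(v 1))*hB + (-(v 2))*hC +
      (u 0*v 1*v 2 + u 1*v 0*v 2 + u 2*v 0*v 1)*htwo
  -- the common divisibility step
  have getα : ∀ x0 x1 x2 : W2, (x0 * a 1 = x1 * a 0) → (x1 * a 2 = x2 * a 1) →
      (x0 * a 2 = x2 * a 0) → ∃ α, x0 = α * a 0 ∧ x1 = α * a 1 ∧ x2 = α * a 2 := by
    intro x0 x1 x2 m01 m12 m02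
    rcases hne with ha0 | ha1
    · obtain ⟨α, h1, h0, h2⟩ := key_div (a 1) (a 2) (a 0) ha0
        (fun p hp h1' h0' h2' => hgcd p hp h0' h1' h2') x1 x0 x2 m01.symm m02 m12
      exact ⟨α, h0, h1, h2⟩
    · obtain ⟨α, h0, h1, h2⟩ := key_div (a 0) (a 2) (a 1) ha1
        (fun p hp h0' h1' h2' => hgcd p hp h0' h1' h2') x0 x1 x2 m01 m12 m02
      exact ⟨α, h0, h1, h2⟩
  let g : (Fin 2 → W2) →ₗ[W2] (Fin 3 → W2) :=
    { toFun := fun c => c 0 • u + c 1 • v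
      map_add' := by intro c d; funext k; simp [add_smul]; ring
      map_smul' := by intro r c; funext k; simp [mul_smul]; ring }
  have hgapp : ∀ (c : Fin 2 → W2) (k : Fin 3), g c k = c 0 * u k + c 1 * v k := by
    intro c k; simp [g]
  have hmem : ∀ c, g c ∈ LinearMap.ker φ := by
    intro c
    have hgc : g c = c 0 • u + c 1 • v := rfl
    rw [LinearMap.mem_ker, hgc, map_add, map_smul, map_smul, hu, hv, smul_zero, smul_zero,
      add_zero]
  let f := g.codRestrict (LinearMap.ker φ) hmem
  have hbij : Function.Bijective f := by
    constructor
    · rw [← LinearMap.ker_eq_bot, LinearMap.ker_eq_bot']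
      intro c hc
      have hgc : g c = 0 := congrArg Subtype.val hc
      have hi0 : c 0 * u 0 + c 1 * v 0 = 0 := by rw [← hgapp]; rw [hgc]; rfl
      have hi1 : c 0 * u 1 + c 1 * v 1 = 0 := by rw [← hgapp]; rw [hgc]; rfl
      have hi2 : c 0 * u 2 + c 1 * v 2 = 0 := by rw [← hgapp]; rw [hgc]; rfl
      have hc00 : c 0 * a 0 = 0 := by
        linear_combination (-(c 0))*hA + v 2*hi1 + v 1*hi2 + (-(c 1*v 1*v 2))*htwo
      have hc01 : c 0 * a 1 = 0 := by
        linear_combination (-(c 0))*hB + v 2*hi0 + v 0*hi2 + (-(c 1*v 0*v 2))*htwo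
      have hc10 : c 1 * a 0 = 0 := by
        linear_combination (-(c 1))*hA + u 2*hi1 + u 1*hi2 + (-(c 0*u 1*u 2))*htwo
      have hc11 : c 1 * a 1 = 0 := by
        linear_combination (-(c 1))*hB + u 2*hi0 + u 0*hi2 + (-(c 0*u 0*u 2))*htwo
      have hc0 : c 0 = 0 := by
        rcases hne with h | h
        · exact (mul_eq_zero.mp hc00).resolve_right h
        · exact (mul_eq_zero.mp hc01).resolve_right h
      have hc1 : c 1 = 0 := by
        rcases hne with h | h
        · exact (mul_eq_zero.mp hc10).resolve_right h
        · exact (mul_eq_zero.mp hc11).resolve_right h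
      funext k; fin_cases k <;> assumption
    · rintro ⟨w, hwmem⟩
      have hw : a 0 * w 0 + a 1 * w 1 + a 2 * w 2 = 0 := by
        rw [LinearMap.mem_ker, hφ] at hwmem; exact hwmem
      -- cross products of w with v and with u
      have m01x : (w 1*v 2 + w 2*v 1) * a 1 = (w 0*v 2 + w 2*v 0) * a 0 := by
        linear_combination ((w 0*v 2 + w 2*v 0) + v 2*w 0) * hA +
          (v 2*w 1 - (w 1*v 2 + w 2*v 1)) * hB + (v 2*w 2) * hC + v 2 * hw +
          (-(u 1*v 0*v 2*w 2 + u 1*v 2^2*w 0 + u 2*v 1*v 2*w 0)) * htwo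
      have m12x : (w 0*v 2 + w 2*v 0) * a 2 = (w 0*v 1 + w 1*v 0) * a 1 := by
        linear_combination (v 0*w 0) * hA + ((w 0*v 1 + w 1*v 0) + v 0*w 1) * hB +
          (v 0*w 2 - (w 0*v 2 + w 2*v 0)) * hC + v 0 * hw +
          (-(u 0*v 0*v 2*w 1 + u 2*v 0^2*w 1 + u 2*v 0*v 1*w 0)) * htwo
      have m02x : (w 1*v 2 + w 2*v 1) * a 2 = (w 0*v 1 + w 1*v 0) * a 0 := by
        linear_combination ((w 0*v 1 + w 1*v 0) + v 1*w 0) * hA + (v 1*w 1) * hB +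
          (v 1*w 2 - (w 1*v 2 + w 2*v 1)) * hC + v 1 * hw +
          (-(u 1*v 1*v 2*w 0 + u 2*v 0*v 1*w 1 + u 2*v 1^2*w 0)) * htwo
      have m01y : (w 1*u 2 + w 2*u 1) * a 1 = (w 0*u 2 + w 2*u 0) * a 0 := by
        linear_combination ((w 0*u 2 + w 2*u 0) + u 2*w 0) * hA +
          (u 2*w 1 - (w 1*u 2 + w 2*u 1)) * hB + (u 2*w 2) * hC + u 2 * hw +
          (-(u 0*u 2*v 1*w 2 + u 1*u 2*v 2*w 0 + u 2^2*v 1*w 0)) * htwo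
      have m12y : (w 0*u 2 + w 2*u 0) * a 2 = (w 0*u 1 + w 1*u 0) * a 1 := by
        linear_combination (u 0*w 0) * hA + ((w 0*u 1 + w 1*u 0) + u 0*w 1) * hB +
          (u 0*w 2 - (w 0*u 2 + w 2*u 0)) * hC + u 0 * hw +
          (-(u 0^2*v 2*w 1 + u 0*u 1*v 2*w 0 + u 0*u 2*v 0*w 1)) * htwo
      have m02y : (w 1*u 2 + w 2*u 1) * a 2 = (w 0*u 1 + w 1*u 0) * a 0 := by
        linear_combination ((w 0*u 1 + w 1*u 0) + u 1*w 0) * hA + (u 1*w 1) * hB +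
          (u 1*w 2 - (w 1*u 2 + w 2*u 1)) * hC + u 1 * hw +
          (-(u 0*u 1*v 2*w 1 + u 1^2*v 2*w 0 + u 1*u 2*v 1*w 0)) * htwo
      obtain ⟨α, hα0, hα1, hα2⟩ := getα _ _ _ m01x m12x m02x
      obtain ⟨β, hβ0, hβ1, hβ2⟩ := getα _ _ _ m01y m12y m02y
      refine ⟨![α, β], ?_⟩
      apply Subtype.ext
      show g ![α, β] = w
      have comp : ∀ (U V Wk : W2), ((α*U + β*V - Wk) * a 0 = 0) → ((α*U + β*V - Wk) * a 1 = 0) →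
          α*U + β*V = Wk := by
        intro U V Wk h0 h1
        rcases hne with ha | ha
        · exact sub_eq_zero.mp ((mul_eq_zero.mp h0).resolve_right ha)
        · exact sub_eq_zero.mp ((mul_eq_zero.mp h1).resolve_right ha)
      have comp0 : α * u 0 + β * v 0 = w 0 := by
        apply comp
        · linear_combination (-(u 0))*hα0 + (-(v 0))*hβ0 +
            hw + w 0*hA + w 1*hB + w 2*hC + (-(w 0))*hA +
            (0 - w 0 * a 0)*htwo
        · linear_combination (-(u 0))*hα1 + (-(v 0))*hβ1 + (-(w 0))*hB +
            ((u 0*v 0*w 2 + u 0*v 2*w 0 + u 2*v 0*w 0) - w 0 * a 1)*htwo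
      have comp1 : α * u 1 + β * v 1 = w 1 := by
        apply comp
        · linear_combination (-(u 1))*hα0 + (-(v 1))*hβ0 + (-(w 1))*hA +
            ((u 1*v 1*w 2 + u 1*v 2*w 1 + u 2*v 1*w 1) - w 1 * a 0)*htwo
        · linear_combination (-(u 1))*hα1 + (-(v 1))*hβ1 +
            hw + w 0*hA + w 1*hB + w 2*hC + (-(w 1))*hB +
            (0 - w 1 * a 1)*htwo
      have comp2 : α * u 2 + β * v 2 = w 2 := by
        apply comp
        · linear_combination (-(u 2))*hα0 + (-(v 2))*hβ0 + (-(w 2))*hA +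
            ((u 1*v 2*w 2 + u 2*v 1*w 2 + u 2*v 2*w 1) - w 2 * a 0)*htwo
        · linear_combination (-(u 2))*hα1 + (-(v 2))*hβ1 + (-(w 2))*hB +
            ((u 0*v 2*w 2 + u 2*v 0*w 2 + u 2*v 2*w 0) - w 2 * a 1)*htwo
      funext k
      rw [hgapp]
      simp only [Matrix.cons_val_zero, Matrix.cons_val_one, Matrix.head_cons]
      fin_cases k
      · exact comp0
      · exact comp1
      · exact comp2
  refine ⟨(Pi.basisFun W2 (Fin 2)).map (LinearEquiv.ofBijective f hbij), ?_, ?_⟩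
  · rw [Module.Basis.map_apply]
    show (g (Pi.basisFun W2 (Fin 2) 0) : Fin 3 → W2) = u
    funext k
    rw [hgapp]
    simp [Pi.basisFun_apply]
  · rw [Module.Basis.map_apply]
    show (g (Pi.basisFun W2 (Fin 2) 1) : Fin 3 → W2) = v
    funext k
    rw [hgapp]
    simp [Pi.basisFun_apply]

lemma koszulD1_apply (n : ℤ) (x : Fin 3 → W2) :
    koszulD1 n x = q3 (n-2) * x 0 + q3 (n-1) * x 1 + q3 n * x 2 := by
  simp [koszulD1, Fin.sum_univ_three, smul_eq_mul]


/-- For `t ≥ 4` and `2^{t−1} < n ≤ 2^t − 4`, with `i = 2^t − 3 − n` and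
`j = n − 2^{t−1} + 1`, the kernel of `(x,y,z) ↦ q_{n−2} x + q_{n−1} y + q_n z` is a free
`W₂`-module of rank 2, with basis `u = (r_j, w₃ r_{j−2}, r_{j−1})` and
`v = (w₃ q_{i−1}, q_{i+1}, q_i)`. -/
theorem koszul_kernel_free_rank_two (t : ℕ) (ht : 4 ≤ t) (n : ℤ)
    (hn1 : 2 ^ (t - 1) < n) (hn2 : n ≤ 2 ^ t - 4) :
    ∃ b : Module.Basis (Fin 2) (MvPolynomial (Fin 2) (ZMod 2)) ↥(LinearMap.ker (koszulD1 n)),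
      ((b 0 : Fin 3 → MvPolynomial (Fin 2) (ZMod 2)) =
        ![r3 (n - 2 ^ (t - 1) + 1), X 1 * r3 (n - 2 ^ (t - 1) - 1), r3 (n - 2 ^ (t - 1))]) ∧
      ((b 1 : Fin 3 → MvPolynomial (Fin 2) (ZMod 2)) =
        ![X 1 * q3 (2 ^ t - 3 - n - 1), q3 (2 ^ t - 3 - n + 1), q3 (2 ^ t - 3 - n)]) := by
  have h2t : (2:ℤ) ^ t = 2 * 2 ^ (t-1) := by
    have h := pow_succ (2:ℤ) (t-1)
    rw [show t-1+1 = t by omega] at h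
    linear_combination h
  set m : ℤ := 2 ^ (t-1) with hmdef
  have hm8 : 8 ≤ m := by
    have : (2:ℤ)^3 ≤ 2^(t-1) := pow_le_pow_right₀ (by norm_num) (by omega)
    norm_num at this; omega
  rw [h2t]
  have hm3 : q3 (m - 3) = 0 := q3_pow_sub_three (t-1)
  have hm5 : q3 (m + 1) = (X 1)^2 * q3 (m - 5) := q3_pow_add_one (t-1) (by omega)
  have hj2 : 2 ≤ n - m + 1 := by omega
  have hjm : n - m + 1 ≤ m - 3 := by omega
  -- the three cross-product identities
  obtain ⟨hBj, hCj⟩ := bc_ident m hm8 hm3 hm5 (n - m + 1) (by omega) hjm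
  obtain ⟨hAj, -⟩ := bc_ident m hm8 hm3 hm5 (n - m) (by omega) (by omega)
  rw [show n-m+1-1 = n-m by ring, show m-3-(n-m+1) = 2*m-3-n-1 by ring,
    show m-2-(n-m+1) = 2*m-3-n by ring, show m-2+(n-m+1) = n-1 by ring] at hBj
  rw [show m-1-(n-m+1) = 2*m-3-n+1 by ring, show n-m+1-2 = n-m-1 by ring,
    show m-3-(n-m+1) = 2*m-3-n-1 by ring, show m-1+(n-m+1) = n by ring] at hCj
  rw [show n-m-1 = n-m-1 by ring, show m-3-(n-m) = 2*m-3-n by ring,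
    show m-2-(n-m) = 2*m-3-n+1 by ring, show m-2+(n-m) = n-2 by ring] at hAj
  set a : Fin 3 → W2 := ![q3 (n-2), q3 (n-1), q3 n] with hadef
  set u : Fin 3 → W2 := ![r3 (n-m+1), X 1 * r3 (n-m-1), r3 (n-m)] with hudef
  set v : Fin 3 → W2 := ![X 1 * q3 (2*m-3-n-1), q3 (2*m-3-n+1), q3 (2*m-3-n)] with hvdef
  have ha0 : a 0 = q3 (n-2) := rfl
  have ha1 : a 1 = q3 (n-1) := rfl
  have ha2 : a 2 = q3 n := rfl
  have hA : u 1 * v 2 + u 2 * v 1 = a 0 := by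
    show (X 1 * r3 (n-m-1)) * q3 (2*m-3-n) + r3 (n-m) * q3 (2*m-3-n+1) = q3 (n-2)
    linear_combination hAj
  have hB : u 0 * v 2 + u 2 * v 0 = a 1 := by
    show r3 (n-m+1) * q3 (2*m-3-n) + r3 (n-m) * (X 1 * q3 (2*m-3-n-1)) = q3 (n-1)
    linear_combination hBj
  have hC : u 0 * v 1 + u 1 * v 0 = a 2 := by
    show r3 (n-m+1) * q3 (2*m-3-n+1) +
      (X 1 * r3 (n-m-1)) * (X 1 * q3 (2*m-3-n-1)) = q3 n
    linear_combination hCj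
  have hne : a 0 ≠ 0 ∨ a 1 ≠ 0 := by
    rw [ha0, ha1]
    rcases Int.even_or_odd n with ⟨r, hr⟩ | ⟨r, hr⟩
    · left
      rw [show n - 2 = 2*(((r-1).toNat : ℤ)) by omega]
      exact q3_even_ne_zero _
    · right
      rw [show n - 1 = 2*((r.toNat : ℤ)) by omega]
      exact q3_even_ne_zero _
  have hgcd : ∀ p : W2, Prime p → p ∣ a 0 → p ∣ a 1 → p ∣ a 2 → False := by
    intro p hp h0 h1 h2
    rw [ha0] at h0; rw [ha1] at h1; rw [ha2] at h2
    exact no_common_prime n (by omega) p hp h0 h1 h2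
  have hφ : ∀ x : Fin 3 → W2, koszulD1 n x = a 0 * x 0 + a 1 * x 1 + a 2 * x 2 := by
    intro x
    rw [koszulD1_apply, ha0, ha1, ha2]
  obtain ⟨b, hb0, hb1⟩ := kernel_basis_abstract a u v hA hB hC hne hgcd (koszulD1 n) hφ
  exact ⟨b, by rw [hb0], by rw [hb1]⟩
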